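/- arXiv:1706.03108 — 3 statements merged into one kernel-verified Lean document; each statement's English description precedes it below -/
import Mathlib

section
/- Let V be a set with a symmetric distance function d satisfying the triangle inequality, P a finite nonempty set (of portals), and d̂ : V × P → ℝ satisfy d(u,p) ≤ d̂(u,p) ≤ d(u,p) + ε₀·Δ for all u ∈ V, p ∈ P (where d(u,p) extends d appropriately and Δ ≥ 0). Suppose A_i, A_j ⊆ V are classes such that for all u, u' in the same class and all p ∈ P, |d̂(u,p) - d̂(u',p)| ≤ ε₀·Δ. Fix x ∈ A_i, y ∈ A_j, and let p* ∈ P minimize d̂(x,p) + d̂(p,y) over p ∈ P. Then for any u ∈ A_i and v ∈ A_j such that min_{p∈P} (d(u,p) + d(p,v)) ≤ d(u,v) + ε₀·Δ, we have d(u,v) ≤ d̂(u,p*) + d̂(p*,v) ≤ d(u,v) + 7·ε₀·Δ. -/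
/-- Key portal lemma (Lemma 4, abstracted): for two classes of vertices whose
approximate distances to all portals agree within `ε₀Δ`, the portal `p*`
minimizing the approximate route for fixed representatives `x, y` gives an
additive `7ε₀Δ` approximation for all shortest-separated pairs `u ∈ Aᵢ`,
`v ∈ Aⱼ`. -/
theorem stmt_5 {V : Type*} (d dhat : V → V → ℝ) (P : Finset V)
    (Ai Aj : Set V) (x y pstar : V) (ε₀ Δ : ℝ)
    (hΔ : 0 ≤ Δ) (hε₀ : 0 ≤ ε₀)
    (hdsymm : ∀ a b, d a b = d b a)
    (htri : ∀ a b c : V, d a c ≤ d a b + d b c)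
    (hdhatsymm : ∀ a b, dhat a b = dhat b a)
    (hP : P.Nonempty)
    (happrox : ∀ u : V, ∀ p ∈ P, d u p ≤ dhat u p ∧ dhat u p ≤ d u p + ε₀ * Δ)
    (hclassI : ∀ u ∈ Ai, ∀ u' ∈ Ai, ∀ p ∈ P, |dhat u p - dhat u' p| ≤ ε₀ * Δ)
    (hclassJ : ∀ v ∈ Aj, ∀ v' ∈ Aj, ∀ p ∈ P, |dhat v p - dhat v' p| ≤ ε₀ * Δ)
    (hx : x ∈ Ai) (hy : y ∈ Aj)
    (hpstar : pstar ∈ P)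
    (hmin : ∀ p ∈ P, dhat x pstar + dhat pstar y ≤ dhat x p + dhat p y) :
    ∀ u ∈ Ai, ∀ v ∈ Aj,
      (∃ p ∈ P, d u p + d p v ≤ d u v + ε₀ * Δ) →
      d u v ≤ dhat u pstar + dhat pstar v ∧
        dhat u pstar + dhat pstar v ≤ d u v + 7 * (ε₀ * Δ) := by
  intro u hu v hv ⟨p, hp, hshort⟩
  constructor
  · have h1 := (happrox u pstar hpstar).1
    have h2 := (happrox v pstar hpstar).1
    have := htri u pstar v
    rw [hdsymm pstar v] at this
    rw [hdhatsymm pstar v]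
    linarith
  · -- upper bound
    have haup : dhat u p ≤ d u p + ε₀ * Δ := (happrox u p hp).2
    have havp : dhat v p ≤ d v p + ε₀ * Δ := (happrox v p hp).2
    have hxu := abs_le.1 (hclassI x hx u hu p hp)
    have hyv := abs_le.1 (hclassJ y hy v hv p hp)
    have hxu' := abs_le.1 (hclassI u hu x hx pstar hpstar)
    have hyv' := abs_le.1 (hclassJ v hv y hy pstar hpstar)
    have hmin' := hmin p hp
    have hxlow := (happrox x pstar hpstar).1
    have hylow := (happrox y pstar hpstar).1
    have hdvp : d p v = d v p := hdsymm p v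
    rw [hdhatsymm p y] at hmin'
    rw [hdhatsymm pstar v, hdhatsymm pstar y] at *
    linarith
end

section
/- In the setting of the key portal lemma: if u, x lie in the same class (meaning |d̂(u,p) - d̂(x,p)| ≤ ε₀Δ for all portals p), then for the portal p minimizing d̂(u,·)+d̂(·,v) and the portal p* minimizing d̂(x,·)+d̂(·,y) (where v, y are in a common class), we have d̂(u,p*) + d̂(p*,v) ≤ d̂(u,p) + d̂(p,v) + 4·ε₀·Δ. -/
/-- Intermediate chain inside the key portal lemma: replacing the optimal
portal `p` for `(u,v)` by the key portal `p*` chosen for class representatives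
`(x,y)` costs at most `4ε₀Δ` additively. -/
theorem stmt_6 {V : Type*} (dhat : V → V → ℝ) (P : Finset V)
    (u v x y p pstar : V) (ε₀ Δ : ℝ)
    (hdhatsymm : ∀ a b, dhat a b = dhat b a)
    (hux : ∀ q ∈ P, |dhat u q - dhat x q| ≤ ε₀ * Δ)
    (hvy : ∀ q ∈ P, |dhat v q - dhat y q| ≤ ε₀ * Δ)
    (hp : p ∈ P)
    (hpmin : ∀ q ∈ P, dhat u p + dhat p v ≤ dhat u q + dhat q v)
    (hpstar : pstar ∈ P)
    (hpstarmin : ∀ q ∈ P, dhat x pstar + dhat pstar y ≤ dhat x q + dhat q y) :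
    dhat u pstar + dhat pstar v ≤ dhat u p + dhat p v + 4 * (ε₀ * Δ) := by
  have h1 := abs_le.mp (hux pstar hpstar)
  have h2 := abs_le.mp (hvy pstar hpstar)
  have h3 := abs_le.mp (hux p hp)
  have h4 := abs_le.mp (hvy p hp)
  have h5 := hpstarmin p hp
  have e1 := hdhatsymm pstar v
  have e2 := hdhatsymm pstar y
  have e3 := hdhatsymm p v
  have e4 := hdhatsymm p y
  linarith
end

section
/- Let Q be a path in a weighted graph with vertex sequence q₀, q₁, ..., q_m along Q, with nonnegative edge weights, total length d(Q) ≤ D, and ε > 0. Let P be constructed greedily: q₀ ∈ P, and scanning along Q, a vertex q is added to P whenever its distance along Q from the last added vertex is at least εD/2. Then |P| ≤ 2·d(Q)/(εD) + 1 ≤ 2/ε + 1, and every vertex of Q is within distance εD/2 (along Q) of some vertex of P. -/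
/-- The pair `(portal set, last added portal)` after greedily scanning the
first `i` vertices of the path: a vertex is added when its distance along the
path from the last added portal is at least the threshold `t`. -/
noncomputable def greedyAux (pos : ℕ → ℝ) (t : ℝ) : ℕ → Finset ℕ × ℕ
  | 0 => ({0}, 0)
  | (i + 1) =>
    let s := greedyAux pos t i
    if t ≤ pos (i + 1) - pos s.2 then (insert (i + 1) s.1, i + 1) else s

/-- The greedy portal set obtained by scanning vertices `0, 1, …, m` of the
path, where `pos i` is the distance along the path from the start to the
`i`-th vertex. -/
noncomputable def greedyPortals (pos : ℕ → ℝ) (t : ℝ) (m : ℕ) : Finset ℕ :=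
  (greedyAux pos t m).1

private lemma greedyAux_succ (pos : ℕ → ℝ) (t : ℝ) (i : ℕ) :
    greedyAux pos t (i + 1) =
      if t ≤ pos (i + 1) - pos (greedyAux pos t i).2 then
        (insert (i + 1) (greedyAux pos t i).1, i + 1)
      else greedyAux pos t i := rfl

/-- Lemma 3 (construction): greedy `ε`-portal selection on a path of length
`d(Q) = pos m ≤ D` produces at most `2·d(Q)/(εD) + 1 ≤ 2/ε + 1` portals, and
every vertex of the path is within distance `εD/2` along the path of some
portal. -/
theorem stmt_7 (pos : ℕ → ℝ) (m : ℕ) (D ε : ℝ)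
    (hpos0 : pos 0 = 0)
    (hmono : ∀ i < m, pos i ≤ pos (i + 1))
    (hD : pos m ≤ D) (hDpos : 0 < D) (hε : 0 < ε) :
    ((greedyPortals pos (ε * D / 2) m).card : ℝ) ≤ 2 * pos m / (ε * D) + 1 ∧
    ((greedyPortals pos (ε * D / 2) m).card : ℝ) ≤ 2 / ε + 1 ∧
    ∀ i ≤ m, ∃ p ∈ greedyPortals pos (ε * D / 2) m,
      p ≤ m ∧ |pos i - pos p| ≤ ε * D / 2 := by
  set t := ε * D / 2 with ht_def
  have ht : 0 < t := by positivity
  -- monotonicity along the path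
  have hmono' : ∀ i j, i ≤ j → j ≤ m → pos i ≤ pos j := by
    intro i j hij hjm
    induction j with
    | zero => simp_all
    | succ k ih =>
      rcases Nat.eq_or_lt_of_le hij with h | h
      · exact h ▸ le_refl _
      · exact le_trans (ih (Nat.lt_succ_iff.mp h) (Nat.le_of_succ_le hjm))
          (hmono k (Nat.lt_of_succ_le hjm))
  -- main invariant by induction on i
  have key : ∀ i ≤ m,
      (greedyAux pos t i).2 ≤ i ∧
      (greedyAux pos t i).2 ∈ (greedyAux pos t i).1 ∧
      (∀ p ∈ (greedyAux pos t i).1, p ≤ i) ∧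
      t * (((greedyAux pos t i).1.card : ℝ) - 1) ≤ pos (greedyAux pos t i).2 ∧
      pos i - pos (greedyAux pos t i).2 < t := by
    intro i him
    induction i with
    | zero =>
      simp [greedyAux, ht, hpos0]
    | succ k ih =>
      obtain ⟨h1, h2, h3, h4, h5⟩ := ih (Nat.le_of_succ_le him)
      rw [greedyAux_succ]
      by_cases hc : t ≤ pos (k + 1) - pos (greedyAux pos t k).2
      · rw [if_pos hc]
        refine ⟨le_refl _, by simp, ?_, ?_, by simpa using ht⟩
        · intro p hp
          rcases Finset.mem_insert.mp hp with h | h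
          · omega
          · exact Nat.le_succ_of_le (h3 p h)
        · have hnotmem : (k+1) ∉ (greedyAux pos t k).1 := fun h => by
            have := h3 _ h; omega
          rw [Finset.card_insert_of_notMem hnotmem]
          push_cast
          have : t * (((greedyAux pos t k).1.card : ℝ) + 1 - 1)
              = t * (((greedyAux pos t k).1.card : ℝ) - 1) + t := by ring
          rw [this]
          linarith
      · rw [if_neg hc]
        push_neg at hc
        refine ⟨Nat.le_succ_of_le h1, h2, fun p hp => Nat.le_succ_of_le (h3 p hp), h4, ?_⟩
        linarith
  obtain ⟨hl2, hlmem, hbound, hcard, hlast⟩ := key m (le_refl m)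
  -- the portal set only grows along the scan
  have hsub : ∀ i j, i ≤ j → (greedyAux pos t i).1 ⊆ (greedyAux pos t j).1 := by
    intro i j hij
    induction j with
    | zero => simp_all
    | succ k ih =>
      rcases Nat.eq_or_lt_of_le hij with h | h
      · exact h ▸ le_refl _
      · refine (ih (Nat.lt_succ_iff.mp h)).trans ?_
        rw [greedyAux_succ]
        by_cases hc : t ≤ pos (k + 1) - pos (greedyAux pos t k).2
        · rw [if_pos hc]; exact Finset.subset_insert _ _
        · rw [if_neg hc]
  have hεD : 0 < ε * D := by positivity
  have hposl : pos (greedyAux pos t m).2 ≤ pos m := hmono' _ m hl2 (le_refl m)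
  have hcard1 : ((greedyPortals pos t m).card : ℝ) ≤ 2 * pos m / (ε * D) + 1 := by
    have : t * (((greedyPortals pos t m).card : ℝ) - 1) ≤ pos m := le_trans hcard hposl
    rw [ht_def] at this
    rw [div_add' _ _ _ (ne_of_gt hεD), le_div_iff₀ hεD]
    nlinarith
  refine ⟨hcard1, ?_, ?_⟩
  · have h2 : 2 * pos m / (ε * D) + 1 ≤ 2 / ε + 1 := by
      have : 2 * pos m / (ε * D) ≤ 2 / ε := by
        rw [div_le_div_iff₀ hεD hε]
        nlinarith
      linarith
    exact le_trans hcard1 h2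
  · intro i him
    obtain ⟨h1, h2, _, _, h5⟩ := key i him
    refine ⟨(greedyAux pos t i).2, hsub i m him h2, le_trans h1 him, ?_⟩
    have : pos (greedyAux pos t i).2 ≤ pos i := hmono' _ i h1 him
    rw [abs_of_nonneg (by linarith)]
    linarith
end
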